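/- arXiv:2408.06171 — 2 statements merged into one kernel-verified Lean document; each statement's English description precedes it below -/
import Mathlib

section
/- Let Γ be a simple graph. If the core CΓ of Γ is a rigid graph, then Γ is rigid. -/
/-- `linkSet G S` is the link of a set `S` of vertices in the simple graph `G`:
the set of vertices adjacent to every vertex of `S`.  (For `S = ∅` this is all of `V`.) -/
def linkSet {V : Type*} (G : SimpleGraph V) (S : Set V) : Set V :=
  {w | ∀ v ∈ S, G.Adj v w}

/-- A simple graph is *rigid* if `Link(Link(v)) = {v}` for every vertex `v`. -/
def IsRigid {V : Type*} (G : SimpleGraph V) : Prop :=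
  ∀ v : V, linkSet G (linkSet G {v}) = {v}

/-- The *star* of a vertex `v` in a simple graph `G`: `{v} ∪ Link(v)`. -/
def starSet {V : Type*} (G : SimpleGraph V) (v : V) : Set V :=
  insert v (G.neighborSet v)

/-- The *core equivalence* on the vertices of a simple graph: `v ≈ w` iff
`Star(v) = Star(w)`. -/
def coreSetoid {V : Type*} (G : SimpleGraph V) : Setoid V where
  r v w := starSet G v = starSet G w
  iseqv := ⟨fun _ => rfl, Eq.symm, Eq.trans⟩

/-- The *core* of a simple graph `G`: the simple graph whose vertices are the core
equivalence classes of `G`, with two distinct classes adjacent iff some (equivalently,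
any) representatives are adjacent in `G`. -/
def coreGraph {V : Type*} (G : SimpleGraph V) :
    SimpleGraph (Quotient (coreSetoid G)) where
  Adj c d := c ≠ d ∧ ∃ v w : V,
    Quotient.mk (coreSetoid G) v = c ∧ Quotient.mk (coreSetoid G) w = d ∧ G.Adj v w
  symm := ⟨by
    rintro c d ⟨hne, v, w, hv, hw, h⟩
    exact ⟨hne.symm, w, v, hw, hv, h.symm⟩⟩
  loopless := ⟨fun c h => h.1 rfl⟩

/-!
Let `u ∈ Link(Link(v))` in `Γ`. Then `u` is not adjacent to `v` (it would be adjacent to itself),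
so for every core class adjacent to the class of `v` the representatives are neighbours of `v`,
hence of `u`, and none of them is core equivalent to `u`. Thus the class of `u` lies in the
double link of the class of `v`, and rigidity of the core makes `u` core equivalent to `v`.
Core equivalent non-adjacent vertices coincide, since `u ∈ Star(u) = Star(v)`.
-/

section

variable {V : Type*} (G : SimpleGraph V)

theorem mem_starSet_iff {v w : V} : w ∈ starSet G v ↔ w = v ∨ G.Adj v w :=
  Set.mem_insert_iff

theorem mk_eq_mk_coreSetoid_iff {v w : V} :
    Quotient.mk (coreSetoid G) v = Quotient.mk (coreSetoid G) w ↔ starSet G v = starSet G w :=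
  Quotient.eq

variable {G}

theorem adj_of_starSet_eq {a b c : V} (hab : starSet G a = starSet G b) (hac : G.Adj a c)
    (hcb : c ≠ b) : G.Adj b c := by
  have hc : c ∈ starSet G b := hab ▸ (mem_starSet_iff G).2 (Or.inr hac)
  exact ((mem_starSet_iff G).1 hc).resolve_left hcb

theorem eq_of_starSet_eq_of_not_adj {u v : V} (huv : starSet G u = starSet G v)
    (hvu : ¬G.Adj v u) : u = v :=
  ((mem_starSet_iff G).1 (huv ▸ Set.mem_insert u _)).resolve_right hvu

theorem coreGraph_adj_mk_iff {v w : V} :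
    (coreGraph G).Adj (Quotient.mk _ v) (Quotient.mk _ w) ↔
      Quotient.mk (coreSetoid G) v ≠ Quotient.mk _ w ∧ G.Adj v w := by
  refine ⟨?_, fun ⟨hne, hvw⟩ => ⟨hne, v, w, rfl, rfl, hvw⟩⟩
  rintro ⟨hne, a, b, hav, hbw, hab⟩
  rw [mk_eq_mk_coreSetoid_iff] at hav hbw
  have hbv : b ≠ v := fun hbv => hne (by rw [mk_eq_mk_coreSetoid_iff, ← hbv, hbw])
  have hvw : v ≠ w := fun hvw => hne (by rw [hvw])
  have hvb : G.Adj v b := adj_of_starSet_eq hav hab hbv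
  exact ⟨hne, (adj_of_starSet_eq hbw hvb.symm hvw).symm⟩

theorem mem_linkSet_linkSet_singleton_iff {u v : V} :
    u ∈ linkSet G (linkSet G {v}) ↔ ∀ x, G.Adj v x → G.Adj x u := by
  simp [linkSet]

theorem mem_linkSet_linkSet_singleton_self (v : V) : v ∈ linkSet G (linkSet G {v}) :=
  mem_linkSet_linkSet_singleton_iff.2 fun _ hvx => hvx.symm

theorem not_adj_of_mem_linkSet_linkSet_singleton {u v : V}
    (hu : u ∈ linkSet G (linkSet G {v})) : ¬G.Adj v u :=
  fun hvu => G.loopless.irrefl u (mem_linkSet_linkSet_singleton_iff.1 hu u hvu)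

theorem mk_mem_linkSet_linkSet_coreGraph {u v : V} (hu : u ∈ linkSet G (linkSet G {v})) :
    Quotient.mk (coreSetoid G) u ∈
      linkSet (coreGraph G) (linkSet (coreGraph G) {Quotient.mk _ v}) := by
  refine mem_linkSet_linkSet_singleton_iff.2 fun c hc => ?_
  induction c using Quotient.inductionOn with | h b => ?_
  obtain ⟨hvb_class, hvb⟩ := coreGraph_adj_mk_iff.1 hc
  refine coreGraph_adj_mk_iff.2 ⟨fun hbu => ?_, mem_linkSet_linkSet_singleton_iff.1 hu b hvb⟩
  -- `v ∈ Star(b) = Star(u)`, and `v` is neither `u` nor adjacent to it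
  have hv : v ∈ starSet G u :=
    (mk_eq_mk_coreSetoid_iff G).1 hbu ▸ (mem_starSet_iff G).2 (Or.inr hvb.symm)
  rcases (mem_starSet_iff G).1 hv with rfl | huv
  · exact hvb_class hbu.symm
  · exact not_adj_of_mem_linkSet_linkSet_singleton hu huv.symm

end

/-- **If the core of a graph is rigid, then the graph is rigid.** -/
theorem isRigid_of_isRigid_coreGraph {V : Type*} (Γ : SimpleGraph V)
    (h : IsRigid (coreGraph Γ)) : IsRigid Γ := by
  intro v
  refine Set.Subset.antisymm (fun u hu => ?_)
    (Set.singleton_subset_iff.2 (mem_linkSet_linkSet_singleton_self v))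
  have hclass := h (Quotient.mk _ v) ▸ mk_mem_linkSet_linkSet_coreGraph hu
  exact eq_of_starSet_eq_of_not_adj ((mk_eq_mk_coreSetoid_iff Γ).1 hclass)
    (not_adj_of_mem_linkSet_linkSet_singleton hu)
end

section
/- For any simple graph Γ, the core of the core of Γ equals the core of Γ: in the core graph CΓ, any two vertices (i.e. core equivalence classes of Γ) whose stars in CΓ are equal must themselves be equal; equivalently, the core equivalence relation on CΓ is the identity relation. -/
namespace SimpleGraph

variable {V : Type*} {G : SimpleGraph V} {v v' w x : V}

local notation "π" => Quotient.mk (coreSetoid G)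

lemma self_mem_starSet : v ∈ starSet G v := Set.mem_insert v _

lemma mem_starSet_of_ne (h : x ≠ v) : x ∈ starSet G v ↔ G.Adj v x := by
  simp [starSet, h]

lemma coreSetoid_mk_eq_mk_iff : π v = π w ↔ starSet G v = starSet G w := Quotient.eq

lemma adj_congr_left_of_starSet_eq (hv : starSet G v = starSet G v')
    (hw : starSet G w ≠ starSet G v) : G.Adj v w ↔ G.Adj v' w := by
  have hwv : w ≠ v := by rintro rfl; exact hw rfl
  have hwv' : w ≠ v' := by rintro rfl; exact hw hv.symm
  rw [← mem_starSet_of_ne hwv, ← mem_starSet_of_ne hwv', hv]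

lemma coreGraph_adj_mk_iff : (coreGraph G).Adj (π v) (π w) ↔ π v ≠ π w ∧ G.Adj v w := by
  refine ⟨fun ⟨hne, v', w', hv', hw', hadj⟩ => ⟨hne, ?_⟩,
    fun ⟨hne, hadj⟩ => ⟨hne, v, w, rfl, rfl, hadj⟩⟩
  rw [← hv', ← hw', ne_eq, coreSetoid_mk_eq_mk_iff] at hne
  rw [coreSetoid_mk_eq_mk_iff] at hv' hw'
  have hvw' : G.Adj v w' := (adj_congr_left_of_starSet_eq hv' (Ne.symm hne)).1 hadj
  exact ((adj_congr_left_of_starSet_eq hw' (hv' ▸ hne)).1 hvw'.symm).symm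

lemma mk_mem_starSet_coreGraph_iff : π x ∈ starSet (coreGraph G) (π v) ↔ x ∈ starSet G v := by
  by_cases hxv : π x = π v
  · rw [hxv, iff_true_intro self_mem_starSet, true_iff, ← coreSetoid_mk_eq_mk_iff.mp hxv]
    exact self_mem_starSet
  · have hxv' : x ≠ v := by rintro rfl; exact hxv rfl
    rw [mem_starSet_of_ne hxv, mem_starSet_of_ne hxv', coreGraph_adj_mk_iff,
      and_iff_right (Ne.symm hxv)]

lemma starSet_eq_preimage_starSet_coreGraph :
    starSet G v = π ⁻¹' starSet (coreGraph G) (π v) :=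
  Set.ext fun _ => mk_mem_starSet_coreGraph_iff.symm

end SimpleGraph

open SimpleGraph in
/-- **The core of the core is the core.**  In the core graph `CΓ` of any simple graph
`Γ`, any two vertices with equal stars are equal; that is, the core equivalence
relation on `CΓ` is the identity relation. -/
theorem coreGraph_coreGraph {V : Type*} (Γ : SimpleGraph V)
    (c d : Quotient (coreSetoid Γ))
    (h : starSet (coreGraph Γ) c = starSet (coreGraph Γ) d) : c = d := by
  induction c using Quotient.inductionOn
  induction d using Quotient.inductionOn
  refine coreSetoid_mk_eq_mk_iff.mpr ?_
  rw [starSet_eq_preimage_starSet_coreGraph, h, ← starSet_eq_preimage_starSet_coreGraph]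
end
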